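/- arXiv:1408.2951 — 2 statements merged into one kernel-verified Lean document; each statement's English description precedes it below -/
import Mathlib

section
/- Let n, m be integers with m ≥ 1 and n − m ≥ 2, and let ε > 0. Define f : ℝ^{n×m} → ℝ by f(M) = det(MᵀM + εI_m)^{−(n−m−1)/2}. Then Δf(M) < 0 for every M ∈ ℝ^{n×m}; that is, f is strictly superharmonic on ℝ^{nm}. -/
/-!
Along the line `t ↦ M + t • E_{ia}` the matrix `A = MᵀM + εI` moves by the symmetric rank-two
perturbation `t (e_a rᵀ + r e_aᵀ) + t² e_a e_aᵀ` (with `r` the `i`-th row of `M`), so by the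
Weinstein–Aronszajn identity its determinant is `det A · (1 + 2βt + ct²)`, where `β` and `c` are
quadratic expressions in `S = A⁻¹`. Differentiating `det^q` twice and summing over `(i, a)` with the
help of `S MᵀM = 1 - εS` gives
`Δ det^q = det A ^ q · (2q(2q-1)(tr S - ε tr S²) + 2q(n - m + ε tr S) tr S)`,
which for `q = -(n-m-1)/2` equals `-(n-m-1) ε det A ^ q ((n-m) tr S² + (tr S)²) < 0`.
-/

open Matrix

/-- The second partial derivative of `f` with respect to the `(i,a)` entry, at `M`. -/
noncomputable def matSecondPartial {n m : ℕ} (f : Matrix (Fin n) (Fin m) ℝ → ℝ)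
    (M : Matrix (Fin n) (Fin m) ℝ) (i : Fin n) (a : Fin m) : ℝ :=
  iteratedDeriv 2 (fun t : ℝ => f (M + t • Matrix.single i a 1)) 0

/-- The Laplacian of `f : ℝ^{n×m} → ℝ`, i.e. the sum of all second partial derivatives
with respect to the entries. -/
noncomputable def matLaplacian {n m : ℕ} (f : Matrix (Fin n) (Fin m) ℝ → ℝ)
    (M : Matrix (Fin n) (Fin m) ℝ) : ℝ :=
  ∑ i : Fin n, ∑ a : Fin m, matSecondPartial f M i a

theorem iteratedDeriv_two_rpow {g g' : ℝ → ℝ} {g'' x : ℝ} (q : ℝ)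
    (hg : ∀ t, HasDerivAt g (g' t) t) (hg' : HasDerivAt g' g'' x) (hne : ∀ t, g t ≠ 0) :
    iteratedDeriv 2 (fun t => g t ^ q) x
      = q * (q - 1) * g x ^ (q - 2) * g' x ^ 2 + q * g x ^ (q - 1) * g'' := by
  have hderiv : deriv (fun t => g t ^ q) = fun t => g' t * q * g t ^ (q - 1) :=
    funext fun t => ((hg t).rpow_const (Or.inl (hne t))).deriv
  have h2 : HasDerivAt (fun t => g' t * q * g t ^ (q - 1))
      (g'' * q * g x ^ (q - 1) + g' x * q * (g' x * (q - 1) * g x ^ (q - 1 - 1))) x :=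
    (hg'.mul_const q).mul ((hg x).rpow_const (Or.inl (hne x)))
  rw [iteratedDeriv_succ, iteratedDeriv_one, hderiv, h2.deriv, sub_sub, one_add_one_eq_two]
  ring

theorem iteratedDeriv_two_rpow_quadratic {D β c : ℝ} (q : ℝ) (hD : 0 < D)
    (hne : ∀ t, D * (1 + 2 * β * t + c * t ^ 2) ≠ 0) :
    iteratedDeriv 2 (fun t => (D * (1 + 2 * β * t + c * t ^ 2)) ^ q) 0
      = D ^ q * (4 * q * (q - 1) * β ^ 2 + 2 * q * c) := by
  have hg (t : ℝ) : HasDerivAt (fun t => D * (1 + 2 * β * t + c * t ^ 2))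
      (D * (2 * β + 2 * c * t)) t := by
    refine ((((hasDerivAt_id t).const_mul (2 * β)).const_add 1).add
      ((hasDerivAt_pow 2 t).const_mul c)).const_mul D |>.congr_deriv ?_
    simp only [Nat.cast_ofNat]
    ring
  have hg' : HasDerivAt (fun t => D * (2 * β + 2 * c * t)) (D * (2 * c)) 0 := by
    simpa using (((hasDerivAt_id (0 : ℝ)).const_mul (2 * c)).const_add (2 * β)).const_mul D
  have hg0 : D * (1 + 2 * β * 0 + c * 0 ^ 2) = D := by ring
  rw [iteratedDeriv_two_rpow q hg hg' hne, hg0, Real.rpow_sub hD, Real.rpow_sub hD, Real.rpow_one,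
    Real.rpow_two]
  field_simp
  ring

variable {ι κ : Type*}

theorem det_add_smul_vecMulVec_add_sq_smul [Fintype ι] [DecidableEq ι] {K : Type*} [Field K]
    {A : Matrix ι ι K} (hA : IsUnit A.det) (hsymm : A.IsSymm) (u v : ι → K) (t : K) :
    (A + t • (vecMulVec u v + vecMulVec v u) + t ^ 2 • vecMulVec u u).det
      = A.det * (1 + 2 * t * (u ⬝ᵥ A⁻¹ *ᵥ v)
        + t ^ 2 * ((u ⬝ᵥ A⁻¹ *ᵥ v) ^ 2 + u ⬝ᵥ A⁻¹ *ᵥ u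
          - (u ⬝ᵥ A⁻¹ *ᵥ u) * (v ⬝ᵥ A⁻¹ *ᵥ v))) := by
  set P : Matrix ι (Fin 2) K := (of ![u, v])ᵀ
  set Q : Matrix (Fin 2) ι K := of ![t • v + t ^ 2 • u, t • u]
  have hPQ : t • (vecMulVec u v + vecMulVec v u) + t ^ 2 • vecMulVec u u = P * Q := by
    ext k l
    simp only [P, Q, Matrix.add_apply, Matrix.smul_apply, vecMulVec_apply, smul_eq_mul,
      Matrix.mul_apply, transpose_apply, of_apply, Fin.sum_univ_two, cons_val_zero, cons_val_one,
      Pi.add_apply, Pi.smul_apply, smul_add]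
    ring
  have hvu : v ⬝ᵥ A⁻¹ *ᵥ u = u ⬝ᵥ A⁻¹ *ᵥ v := by
    rw [dotProduct_mulVec, ← mulVec_transpose, hsymm.inv.eq, dotProduct_comm]
  have hQSP : Q * (A⁻¹ * P) = !![t * (u ⬝ᵥ A⁻¹ *ᵥ v) + t ^ 2 * (u ⬝ᵥ A⁻¹ *ᵥ u),
      t * (v ⬝ᵥ A⁻¹ *ᵥ v) + t ^ 2 * (u ⬝ᵥ A⁻¹ *ᵥ v);
      t * (u ⬝ᵥ A⁻¹ *ᵥ u), t * (u ⬝ᵥ A⁻¹ *ᵥ v)] := by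
    ext j k
    rw [mul_apply']
    have hcol : (fun x => (A⁻¹ * P) x k) = A⁻¹ *ᵥ ![u, v] k := by
      ext x; simp [P, mul_apply, mulVec, dotProduct]
    rw [hcol, show Q j = ![t • v + t ^ 2 • u, t • u] j from rfl]
    fin_cases j <;> fin_cases k <;> simp [add_dotProduct, smul_dotProduct, hvu]
  rw [add_assoc, hPQ, show A + P * Q = A * (1 + A⁻¹ * P * Q) by
    rw [Matrix.mul_add, Matrix.mul_one, ← Matrix.mul_assoc, ← Matrix.mul_assoc,
      mul_nonsing_inv _ hA, Matrix.one_mul],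
    det_mul, det_one_add_mul_comm, hQSP, det_fin_two]
  congr 1
  simp only [Matrix.add_apply, one_apply_eq, one_apply_ne zero_ne_one, one_apply_ne one_ne_zero,
    of_apply, cons_val', cons_val_zero, cons_val_fin_one, cons_val_one, zero_add]
  ring

theorem sum_dotProduct_mulVec_rows [Fintype ι] [Fintype κ] {R : Type*} [CommRing R]
    (M : Matrix ι κ R) (X : Matrix κ κ R) : ∑ i, M i ⬝ᵥ X *ᵥ M i = trace (X * (Mᵀ * M)) := by
  rw [← Matrix.mul_assoc, trace_mul_cycle]
  simp only [trace, diag, mul_apply, transpose_apply, dotProduct, mulVec, Finset.sum_mul,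
    Finset.mul_sum]
  refine Finset.sum_congr rfl fun _ _ => Finset.sum_comm.trans ?_
  simp only [mul_assoc]

theorem transpose_mul_self_add_smul_single [Fintype ι] [DecidableEq ι] [DecidableEq κ]
    {R : Type*} [CommRing R]
    (M : Matrix ι κ R) (i : ι) (a : κ) (t : R) :
    (M + t • single i a 1)ᵀ * (M + t • single i a 1)
      = Mᵀ * M + t • (vecMulVec (Pi.single a 1) (M i) + vecMulVec (M i) (Pi.single a 1))
        + t ^ 2 • vecMulVec (Pi.single a 1) (Pi.single a 1) := by
  ext k l
  simp only [single, ite_and, smul_of, transpose_add, mul_apply, Matrix.add_apply, transpose_apply,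
    of_apply, Pi.smul_apply, smul_eq_mul, mul_ite, mul_one, mul_zero, mul_add, add_mul, ite_mul,
    zero_mul, Finset.sum_add_distrib, Finset.sum_ite_eq, Finset.mem_univ, if_true, smul_add,
    Matrix.smul_apply, vecMulVec_apply, Pi.single_apply, eq_comm, one_mul]
  split_ifs <;> ring

section RegGram

variable [Fintype ι] [DecidableEq κ]

def regGram (ε : ℝ) (M : Matrix ι κ ℝ) : Matrix κ κ ℝ := Mᵀ * M + ε • 1

theorem isSymm_regGram (ε : ℝ) (M : Matrix ι κ ℝ) : (regGram ε M).IsSymm := by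
  simp [regGram, IsSymm, transpose_add, transpose_mul]

variable [Fintype κ]

theorem posDef_regGram {ε : ℝ} (hε : 0 < ε) (M : Matrix ι κ ℝ) : (regGram ε M).PosDef := by
  refine PosDef.posSemidef_add ?_ ?_
  · simpa using posSemidef_conjTranspose_mul_self M
  · rw [smul_one_eq_diagonal]
    exact posDef_diagonal_iff.mpr fun _ => hε

theorem regGram_inv_mul_transpose_mul_self {ε : ℝ} (hε : 0 < ε) (M : Matrix ι κ ℝ) :
    (regGram ε M)⁻¹ * (Mᵀ * M) = 1 - ε • (regGram ε M)⁻¹ := by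
  have h := nonsing_inv_mul _ (posDef_regGram hε M).det_pos.ne'.isUnit
  unfold regGram at h ⊢
  rw [Matrix.mul_add, Matrix.mul_smul, Matrix.mul_one] at h
  rwa [eq_sub_iff_add_eq]

theorem sum_sq_regGram_inv_mulVec {ε : ℝ} (hε : 0 < ε) (M : Matrix ι κ ℝ) :
    ∑ i, ∑ a, ((regGram ε M)⁻¹ *ᵥ M i) a ^ 2
      = trace (regGram ε M)⁻¹ - ε * trace ((regGram ε M)⁻¹ * (regGram ε M)⁻¹) := by
  set S := (regGram ε M)⁻¹
  have hS : Sᵀ = S := (isSymm_regGram ε M).inv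
  have (v : κ → ℝ) : ∑ a, (S *ᵥ v) a ^ 2 = v ⬝ᵥ (S * S) *ᵥ v := by
    rw [← mulVec_mulVec, dotProduct_mulVec, ← mulVec_transpose, hS]
    simp [dotProduct, sq]
  simp only [this]
  rw [sum_dotProduct_mulVec_rows, Matrix.mul_assoc, regGram_inv_mul_transpose_mul_self hε,
    Matrix.mul_sub, Matrix.mul_one, Matrix.mul_smul, trace_sub, trace_smul, smul_eq_mul]

theorem sum_dotProduct_regGram_inv_mulVec {ε : ℝ} (hε : 0 < ε) (M : Matrix ι κ ℝ) :
    ∑ i, M i ⬝ᵥ (regGram ε M)⁻¹ *ᵥ M i = Fintype.card κ - ε * trace (regGram ε M)⁻¹ := by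
  rw [sum_dotProduct_mulVec_rows, regGram_inv_mul_transpose_mul_self hε, trace_sub, trace_smul,
    trace_one, smul_eq_mul]

theorem det_regGram_add_smul_single [DecidableEq ι] {ε : ℝ} (hε : 0 < ε) (M : Matrix ι κ ℝ)
    (i : ι) (a : κ) (t : ℝ) :
    (regGram ε (M + t • single i a 1)).det = (regGram ε M).det *
      (1 + 2 * ((regGram ε M)⁻¹ *ᵥ M i) a * t
        + (((regGram ε M)⁻¹ *ᵥ M i) a ^ 2 + (regGram ε M)⁻¹ a a
          - (regGram ε M)⁻¹ a a * (M i ⬝ᵥ (regGram ε M)⁻¹ *ᵥ M i)) * t ^ 2) := by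
  have hline : regGram ε (M + t • single i a 1) = regGram ε M
      + t • (vecMulVec (Pi.single a 1) (M i) + vecMulVec (M i) (Pi.single a 1))
      + t ^ 2 • vecMulVec (Pi.single a 1) (Pi.single a 1) := by
    rw [regGram, regGram, transpose_mul_self_add_smul_single]
    abel
  rw [hline, det_add_smul_vecMulVec_add_sq_smul (posDef_regGram hε M).det_pos.ne'.isUnit
    (isSymm_regGram ε M)]
  congr 1
  simp only [single_dotProduct, one_mul, mulVec_single_one, col_apply]
  ring

end RegGram

theorem matSecondPartial_det_regGram_rpow {n m : ℕ} {ε : ℝ} (hε : 0 < ε) (q : ℝ)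
    (M : Matrix (Fin n) (Fin m) ℝ) (i : Fin n) (a : Fin m) :
    matSecondPartial (fun N => (regGram ε N).det ^ q) M i a
      = (regGram ε M).det ^ q * (4 * q * (q - 1) * ((regGram ε M)⁻¹ *ᵥ M i) a ^ 2
        + 2 * q * (((regGram ε M)⁻¹ *ᵥ M i) a ^ 2 + (regGram ε M)⁻¹ a a
          - (regGram ε M)⁻¹ a a * (M i ⬝ᵥ (regGram ε M)⁻¹ *ᵥ M i))) := by
  unfold matSecondPartial
  simp only [det_regGram_add_smul_single hε]
  refine iteratedDeriv_two_rpow_quadratic q (posDef_regGram hε M).det_pos fun t => ?_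
  rw [← det_regGram_add_smul_single hε]
  exact (posDef_regGram hε _).det_pos.ne'

theorem matLaplacian_det_regGram_rpow {n m : ℕ} {ε : ℝ} (hε : 0 < ε) (q : ℝ)
    (M : Matrix (Fin n) (Fin m) ℝ) :
    matLaplacian (fun N => (regGram ε N).det ^ q) M
      = (regGram ε M).det ^ q * (2 * q * (2 * q - 1)
          * (trace (regGram ε M)⁻¹ - ε * trace ((regGram ε M)⁻¹ * (regGram ε M)⁻¹))
        + 2 * q * (n - m + ε * trace (regGram ε M)⁻¹) * trace (regGram ε M)⁻¹) := by
  have htrace : ∑ a, (regGram ε M)⁻¹ a a = trace (regGram ε M)⁻¹ := rfl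
  unfold matLaplacian
  simp only [matSecondPartial_det_regGram_rpow hε, Finset.sum_add_distrib, Finset.sum_sub_distrib,
    ← Finset.mul_sum, ← Finset.sum_mul]
  rw [sum_sq_regGram_inv_mulVec hε, sum_dotProduct_regGram_inv_mulVec hε, htrace,
    Finset.sum_const, Finset.card_univ, Fintype.card_fin, Fintype.card_fin, nsmul_eq_mul]
  ring

theorem stmt1 (n m : ℕ) (hm : 1 ≤ m) (hnm : m + 2 ≤ n) (ε : ℝ) (hε : 0 < ε)
    (f : Matrix (Fin n) (Fin m) ℝ → ℝ)
    (hf : f = fun M => ((Mᵀ * M + ε • (1 : Matrix (Fin m) (Fin m) ℝ)).det)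
      ^ (-(((n : ℝ) - m - 1)) / 2)) :
    ∀ M : Matrix (Fin n) (Fin m) ℝ, matLaplacian f M < 0 := by
  subst hf
  intro M
  have : Nonempty (Fin m) := ⟨⟨0, hm⟩⟩
  set S := (regGram ε M)⁻¹
  have hS : S.PosDef := (posDef_regGram hε M).inv
  have hT : 0 < trace S := hS.trace_pos
  have hU : 0 ≤ trace (S * S) := by
    simpa only [hS.isHermitian.eq] using (posSemidef_conjTranspose_mul_self S).trace_nonneg
  have hD : 0 < (regGram ε M).det ^ (-((n : ℝ) - m - 1) / 2) :=
    Real.rpow_pos_of_pos (posDef_regGram hε M).det_pos _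
  have hnm' : (m : ℝ) + 2 ≤ n := by exact_mod_cast hnm
  refine (matLaplacian_det_regGram_rpow hε _ M).trans_lt ?_
  calc _ = (regGram ε M).det ^ (-((n : ℝ) - m - 1) / 2)
        * (-((n : ℝ) - m - 1) * ε * ((n - m) * trace (S * S) + trace S ^ 2)) := by ring
    _ < 0 := mul_neg_of_pos_of_neg hD <| mul_neg_of_neg_of_pos
        (mul_neg_of_neg_of_pos (by linarith) hε)
        (add_pos_of_nonneg_of_pos (mul_nonneg (by linarith) hU) (pow_pos hT 2))
end

section
/- (Lemma 1) Let d ≥ 1, let π : ℝ^d → [0,∞] be superharmonic, and let Σ be a d×d positive definite matrix with Gaussian density φ_Σ(x) = (2π)^{−d/2} (det Σ)^{−1/2} exp(−½ xᵀΣ⁻¹x). If the marginal m_π(x) = ∫_{ℝ^d} φ_Σ(x − a) π(a) da is finite for every x ∈ ℝ^d, then m_π is superharmonic: it is lower semicontinuous, not identically +∞, and for every x ∈ ℝ^d and every δ > 0 the integral of m_π over the sphere {z : ‖z − x‖ = δ} with respect to the normalized (d−1)-dimensional surface (Hausdorff) measure is at most m_π(x). -/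
/-!
Write the marginal as the convolution `φ ⋆ π` of the Gaussian kernel with `π`. Lower
semicontinuity passes to the convolution by Fatou's lemma. For the sphere means, Tonelli's theorem
reduces the mean of `φ ⋆ π` to a `φ`-weighted integral of the sphere means of the translates
`π (· - b)`; since the Hausdorff measure is invariant under isometries, these are sphere means of
`π` itself, so each is at most `π (x - b)`.
-/

open Matrix MeasureTheory Metric ENNReal

/-- A function `f : ℝ^d → [0,∞]` is superharmonic if it is lower semicontinuous, not
identically `+∞`, and its mean over every sphere (with respect to the normalized
`(d-1)`-dimensional Hausdorff surface measure) is at most its value at the center. -/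
def SuperharmonicFn (d : ℕ) (f : EuclideanSpace ℝ (Fin d) → ℝ≥0∞) : Prop :=
  LowerSemicontinuous f ∧ (∃ x, f x ≠ ⊤) ∧
    ∀ (x : EuclideanSpace ℝ (Fin d)) (δ : ℝ), 0 < δ →
      ∫⁻ z in sphere x δ, f z
          ∂((μH[(d : ℝ) - 1] (sphere x δ))⁻¹ • μH[(d : ℝ) - 1]) ≤ f x

/-- The centered Gaussian density on `ℝ^d` with covariance matrix `S`:
`φ_S(x) = (2π)^{-d/2} (det S)^{-1/2} exp(-½ xᵀ S⁻¹ x)`. -/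
noncomputable def gaussDensityMat (d : ℕ) (S : Matrix (Fin d) (Fin d) ℝ)
    (x : EuclideanSpace ℝ (Fin d)) : ℝ :=
  (2 * Real.pi) ^ (-(d : ℝ) / 2) * S.det ^ (-(1 : ℝ) / 2) *
    Real.exp (-(1 / 2) * ((fun i => x i) ⬝ᵥ (S⁻¹ *ᵥ fun i => x i)))

open Filter Topology

noncomputable def normalizedSphereMeasure {X : Type*} [MetricSpace X] [MeasurableSpace X]
    [BorelSpace X] (s : ℝ) (x : X) (r : ℝ) : Measure X :=
  ((μH[s] (sphere x r))⁻¹ • μH[s]).restrict (sphere x r)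

section Sphere

variable {X Y : Type*} [MetricSpace X] [MeasurableSpace X] [BorelSpace X]
  [MetricSpace Y] [MeasurableSpace Y] [BorelSpace Y]

-- `c⁻¹ * c ≤ 1` holds in `ℝ≥0∞` also for `c = 0` and `c = ∞`, where the measure is zero.
instance (s : ℝ) (x : X) (r : ℝ) : IsFiniteMeasure (normalizedSphereMeasure s x r) := by
  constructor
  rw [normalizedSphereMeasure, Measure.restrict_apply_univ, Measure.smul_apply, smul_eq_mul]
  exact (ENNReal.inv_mul_le_one _).trans_lt ENNReal.one_lt_top

theorem IsometryEquiv.map_normalizedSphereMeasure (e : X ≃ᵢ Y) (s : ℝ) (x : X) (r : ℝ) :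
    (normalizedSphereMeasure s x r).map e = normalizedSphereMeasure s (e x) r := by
  have hpre : e ⁻¹' sphere (e x) r = sphere x r := by
    rw [e.preimage_sphere, e.symm_apply_apply]
  have hmass : μH[s] (sphere (e x) r) = μH[s] (sphere x r) := by
    rw [← hpre, e.hausdorffMeasure_preimage]
  have he : MeasurableEmbedding e := e.toHomeomorph.measurableEmbedding
  rw [normalizedSphereMeasure, normalizedSphereMeasure, hmass, ← e.map_hausdorffMeasure s,
    ← Measure.map_smul, he.restrict_map, hpre]

theorem IsometryEquiv.lintegral_normalizedSphereMeasure_comp (e : X ≃ᵢ Y) (g : Y → ℝ≥0∞)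
    (s : ℝ) (x : X) (r : ℝ) :
    ∫⁻ z, g (e z) ∂normalizedSphereMeasure s x r =
      ∫⁻ w, g w ∂normalizedSphereMeasure s (e x) r := by
  rw [← e.map_normalizedSphereMeasure]
  exact (lintegral_map_equiv g e.toHomeomorph.toMeasurableEquiv).symm

end Sphere

theorem ENNReal.lowerSemicontinuous_const_mul {X : Type*} [TopologicalSpace X] {g : X → ℝ≥0∞}
    (hg : LowerSemicontinuous g) (c : ℝ≥0∞) : LowerSemicontinuous fun x => c * g x := by
  refine lowerSemicontinuous_iff_le_liminf.2 fun x => ?_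
  calc c * g x ≤ liminf (fun _ => c) (𝓝 x) * liminf g (𝓝 x) := by
        rw [liminf_const]; gcongr; exact hg.le_liminf x
    _ ≤ _ := ENNReal.le_liminf_mul

theorem lowerSemicontinuous_lintegral {X α : Type*} [TopologicalSpace X]
    [FirstCountableTopology X] [MeasurableSpace α] {μ : Measure α} {g : X → α → ℝ≥0∞}
    (hlsc : ∀ a, LowerSemicontinuous (g · a)) (hm : ∀ x, Measurable (g x)) :
    LowerSemicontinuous fun x => ∫⁻ a, g x a ∂μ :=
  lowerSemicontinuous_iff_le_liminf.2 fun x =>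
    (lintegral_mono fun a => (hlsc a).le_liminf x).trans (lintegral_liminf_le hm)

section Convolution

variable {G : Type*} [MeasurableSpace G] [AddGroup G] [MeasurableAdd₂ G] [MeasurableNeg G]
  {μ : Measure G} {k f : G → ℝ≥0∞}

theorem LowerSemicontinuous.lconvolution [TopologicalSpace G] [ContinuousAdd G]
    [FirstCountableTopology G] (hk : Measurable k) (hf : Measurable f)
    (hlsc : LowerSemicontinuous f) : LowerSemicontinuous (k ⋆ₗ[μ] f) :=
  lowerSemicontinuous_lintegral
    (fun b => ENNReal.lowerSemicontinuous_const_mul (hlsc.comp (continuous_const_add _)) _)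
    (fun x => by fun_prop)

theorem lintegral_lconvolution_le {ν : Measure G} [SFinite μ] [SFinite ν] (hk : Measurable k)
    (hf : Measurable f) {x : G} (hmean : ∀ b, ∫⁻ z, f (-b + z) ∂ν ≤ f (-b + x)) :
    ∫⁻ z, (k ⋆ₗ[μ] f) z ∂ν ≤ (k ⋆ₗ[μ] f) x := by
  have hm : Measurable fun p : G × G => k p.2 * f (-p.2 + p.1) := by fun_prop
  calc ∫⁻ z, (k ⋆ₗ[μ] f) z ∂ν = ∫⁻ b, ∫⁻ z, k b * f (-b + z) ∂ν ∂μ :=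
        lintegral_lintegral_swap hm.aemeasurable
    _ = ∫⁻ b, k b * ∫⁻ z, f (-b + z) ∂ν ∂μ :=
        lintegral_congr fun b => lintegral_const_mul _ (hf.comp (measurable_const_add (-b)))
    _ ≤ (k ⋆ₗ[μ] f) x := lintegral_mono fun b => by gcongr; exact hmean b

end Convolution

theorem SuperharmonicFn.lconvolution {d : ℕ} {f k : EuclideanSpace ℝ (Fin d) → ℝ≥0∞}
    (hf : SuperharmonicFn d f) (hk : Measurable k) (hfin : ∃ x, (k ⋆ₗ f) x ≠ ⊤) :
    SuperharmonicFn d (k ⋆ₗ f) := by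
  obtain ⟨hlsc, -, hmean⟩ := hf
  refine ⟨hlsc.lconvolution hk hlsc.measurable, hfin, fun x δ hδ =>
    lintegral_lconvolution_le (ν := normalizedSphereMeasure ((d : ℝ) - 1) x δ) hk
      hlsc.measurable fun b => ?_⟩
  exact ((IsometryEquiv.addLeft (-b)).lintegral_normalizedSphereMeasure_comp f _ x δ).trans_le
    (hmean _ δ hδ)

theorem continuous_gaussDensityMat (d : ℕ) (S : Matrix (Fin d) (Fin d) ℝ) :
    Continuous (gaussDensityMat d S) := by
  unfold gaussDensityMat
  simp only [dotProduct, mulVec]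
  fun_prop

theorem stmt5_general (d : ℕ)
    (π : EuclideanSpace ℝ (Fin d) → ℝ≥0∞) (hπ : SuperharmonicFn d π)
    (S : Matrix (Fin d) (Fin d) ℝ)
    (mπ : EuclideanSpace ℝ (Fin d) → ℝ≥0∞)
    (hmπ : mπ = fun x => ∫⁻ a, ENNReal.ofReal (gaussDensityMat d S (x - a)) * π a)
    (hfin : ∀ x, mπ x ≠ ⊤) :
    SuperharmonicFn d mπ := by
  set φ := fun b => ENNReal.ofReal (gaussDensityMat d S b)
  have hconv : mπ = φ ⋆ₗ π := by
    rw [hmπ, lconvolution_comm]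
    funext x
    exact lintegral_congr fun a => by rw [mul_comm, neg_add_eq_sub]
  rw [hconv] at hfin ⊢
  exact hπ.lconvolution (continuous_gaussDensityMat d S).measurable.ennreal_ofReal ⟨0, hfin 0⟩

theorem stmt5 (d : ℕ) (hd : 1 ≤ d)
    (π : EuclideanSpace ℝ (Fin d) → ℝ≥0∞) (hπ : SuperharmonicFn d π)
    (S : Matrix (Fin d) (Fin d) ℝ) (hS : S.PosDef)
    (mπ : EuclideanSpace ℝ (Fin d) → ℝ≥0∞)
    (hmπ : mπ = fun x => ∫⁻ a, ENNReal.ofReal (gaussDensityMat d S (x - a)) * π a)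
    (hfin : ∀ x, mπ x ≠ ⊤) :
    SuperharmonicFn d mπ :=
  stmt5_general d π hπ S mπ hmπ hfin
end
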